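/- Let H be a self-adjoint operator on a Hilbert space ℋ, T > 0, δ > 0, and let {E(t)}_{t ∈ [0, δ)} be a family of bounded operators on ℋ with E(0) = I. Let P be a bounded operator commuting with e^{−isH} for all s. Assume (stability) ‖E(t)‖ ≤ e^{Ct} for all t ∈ (0, δ), and (local error) ‖(E(t) − e^{−itH})P‖ ≤ C_ε t^{1+ε} for all t ∈ (0, δ), where ε > 0. Then for every t ∈ (0, T] and every partition Δ = (t₁, ..., t_L) of t with each t_j ∈ (0, δ), the telescoping estimate ‖(E(t_L)⋯E(t₁) − e^{−itH})P‖ ≤ e^{CT} C_ε t |Δ|^ε holds, where |Δ| = max_j t_j. -/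

import Mathlib

open Set

/-!
Write `U(t) = U(t_L)⋯U(t₁)` and telescope: the difference `E(t_L)⋯E(t₁) - U(t)` is the sum over
`j` of `E(t_L)⋯E(t_{j+1}) (E(t_j) - U(t_j)) U(t_{j-1} + ⋯ + t₁)`. Since `P` commutes with the
unitaries, each term times `P` has norm at most `e^{Ct} ‖(E(t_j) - U(t_j))P‖ ≤ e^{Ct} C_ε t_j^{1+ε}`,
and `∑ t_j^{1+ε} ≤ (∑ t_j) |Δ|^ε = t |Δ|^ε`.
-/

theorem norm_prod_map_sub_mul_le {A : Type*} [NormedRing A] {E U : ℝ → A} {P : A} {C : ℝ}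
    (hU0 : U 0 = 1) (hUadd : ∀ s σ : ℝ, U (s + σ) = U s * U σ) (hU1 : ∀ s, ‖U s‖ ≤ 1)
    (hP : ∀ s, P * U s = U s * P) (hC : 0 ≤ C) :
    ∀ l : List ℝ, (∀ a ∈ l, 0 ≤ a) → (∀ a ∈ l, ‖E a‖ ≤ Real.exp (C * a)) →
      ‖((l.map E).prod - U l.sum) * P‖ ≤
        Real.exp (C * l.sum) * (l.map fun a => ‖(E a - U a) * P‖).sum
  | [], _, _ => by simp [hU0]
  | a :: l, hl, hstab => by
    set X := (l.map E).prod
    set s := l.sum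
    set R := (l.map fun a => ‖(E a - U a) * P‖).sum
    have ih : ‖(X - U s) * P‖ ≤ Real.exp (C * s) * R :=
      norm_prod_map_sub_mul_le hU0 hUadd hU1 hP hC l (fun b hb => hl b (.tail _ hb))
        (fun b hb => hstab b (.tail _ hb))
    have htelescope : (E a * X - U (a + s)) * P = E a * ((X - U s) * P) + (E a - U a) * P * U s := by
      rw [hUadd, mul_assoc (E a - U a), hP]
      noncomm_ring
    have hs : 0 ≤ s := List.sum_nonneg fun b hb => hl b (.tail _ hb)
    have hexp_ge_one : 1 ≤ Real.exp (C * (a + s)) :=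
      Real.one_le_exp (mul_nonneg hC (add_nonneg (hl a (.head _)) hs))
    have hR : 0 ≤ R := List.sum_nonneg (by simp)
    simp only [List.map_cons, List.prod_cons, List.sum_cons]
    rw [htelescope]
    calc ‖E a * ((X - U s) * P) + (E a - U a) * P * U s‖
        ≤ ‖E a‖ * ‖(X - U s) * P‖ + ‖(E a - U a) * P‖ * ‖U s‖ :=
          (norm_add_le _ _).trans (add_le_add (norm_mul_le _ _) (norm_mul_le _ _))
      _ ≤ Real.exp (C * a) * (Real.exp (C * s) * R) + ‖(E a - U a) * P‖ * 1 := by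
          gcongr
          · exact hstab a (.head _)
          · exact hU1 s
      _ = Real.exp (C * (a + s)) * R + ‖(E a - U a) * P‖ := by
          rw [mul_add, Real.exp_add]; ring
      _ ≤ Real.exp (C * (a + s)) * (‖(E a - U a) * P‖ + R) := by
          nlinarith [norm_nonneg ((E a - U a) * P)]

theorem List.sum_map_rpow_one_add_le {l : List ℝ} {M ε : ℝ} (hε : 0 ≤ ε)
    (hl : ∀ a ∈ l, 0 ≤ a ∧ a ≤ M) :
    (l.map fun a => a ^ (1 + ε)).sum ≤ l.sum * M ^ ε := by
  calc (l.map fun a => a ^ (1 + ε)).sum ≤ (l.map fun a => a * M ^ ε).sum := by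
        refine List.sum_le_sum fun a ha => ?_
        rw [Real.rpow_add' (hl a ha).1 (by linarith), Real.rpow_one]
        exact mul_le_mul_of_nonneg_left (Real.rpow_le_rpow (hl a ha).1 (hl a ha).2 hε) (hl a ha).1
    _ = l.sum * M ^ ε := by rw [List.sum_map_mul_right, List.map_id']

theorem telescoping_estimate_general
    {ℋ : Type*} [NormedAddCommGroup ℋ] [InnerProductSpace ℂ ℋ]
    (U : ℝ → ℋ →L[ℂ] ℋ) (hU0 : U 0 = 1)
    (hUgrp : ∀ s σ : ℝ, U (s + σ) = U s ∘L U σ)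
    (hUnorm : ∀ (s : ℝ) (x : ℋ), ‖U s x‖ = ‖x‖)
    (P : ℋ →L[ℂ] ℋ) (hP : ∀ s : ℝ, P ∘L U s = U s ∘L P)
    (E : ℝ → ℋ →L[ℂ] ℋ)
    (T δ C Cε ε : ℝ) (hC : 0 ≤ C) (hCε : 0 ≤ Cε) (hε : 0 < ε)
    (hstab : ∀ t ∈ Ioo (0 : ℝ) δ, ‖E t‖ ≤ Real.exp (C * t))
    (herr : ∀ t ∈ Ioo (0 : ℝ) δ, ‖(E t - U t) ∘L P‖ ≤ Cε * t ^ (1 + ε)) :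
    ∀ t ∈ Ioc (0 : ℝ) T, ∀ l : List ℝ, l ≠ [] → (∀ s ∈ l, s ∈ Ioo (0 : ℝ) δ) →
      l.sum = t →
      ‖((l.map E).prod - U t) ∘L P‖ ≤ Real.exp (C * T) * Cε * t * (l.foldr max 0) ^ ε := by
  rintro t ⟨-, htT⟩ l - hl rfl
  have hU1 (s : ℝ) : ‖U s‖ ≤ 1 :=
    ContinuousLinearMap.opNorm_le_bound _ zero_le_one fun x => by rw [hUnorm, one_mul]
  have htele := norm_prod_map_sub_mul_le hU0 hUgrp hU1 hP hC l (fun a ha => (hl a ha).1.le)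
    (fun a ha => hstab a (hl a ha))
  have herr_sum : (l.map fun a => ‖(E a - U a) * P‖).sum ≤ Cε * (l.sum * (l.foldr max 0) ^ ε) :=
    calc (l.map fun a => ‖(E a - U a) * P‖).sum ≤ (l.map fun a => Cε * a ^ (1 + ε)).sum :=
          List.sum_le_sum fun a ha => herr a (hl a ha)
      _ = Cε * (l.map fun a => a ^ (1 + ε)).sum := List.sum_map_mul_left ..
      _ ≤ Cε * (l.sum * (l.foldr max 0) ^ ε) := mul_le_mul_of_nonneg_left
          (List.sum_map_rpow_one_add_le hε.le fun a ha =>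
            ⟨(hl a ha).1.le, List.le_max_of_le' 0 ha le_rfl⟩) hCε
  calc ‖((l.map E).prod - U l.sum) ∘L P‖
      ≤ Real.exp (C * l.sum) * (l.map fun a => ‖(E a - U a) * P‖).sum := htele
    _ ≤ Real.exp (C * T) * (Cε * (l.sum * (l.foldr max 0) ^ ε)) := by
        gcongr
        exact List.sum_nonneg (by simp)
    _ = Real.exp (C * T) * Cε * l.sum * (l.foldr max 0) ^ ε := by ring

/-- the telescoping estimate. Given a one-parameter unitary group `U`, a family
`E(t)` of bounded operators with `E(0) = 1` satisfying stability `‖E(t)‖ ≤ e^{Ct}` and the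
local error bound `‖(E(t) − U(t))P‖ ≤ C_ε t^{1+ε}` (P bounded, commuting with the group), one
has for every `t ∈ (0,T]` and every partition `(t₁,…,t_L)` of `t` with all `t_j ∈ (0,δ)`:
`‖(E(t_L)⋯E(t₁) − U(t))P‖ ≤ e^{CT} C_ε t |Δ|^ε`. -/
theorem telescoping_estimate
    {ℋ : Type*} [NormedAddCommGroup ℋ] [InnerProductSpace ℂ ℋ] [CompleteSpace ℋ]
    (U : ℝ → ℋ →L[ℂ] ℋ) (hU0 : U 0 = 1)
    (hUgrp : ∀ s σ : ℝ, U (s + σ) = U s ∘L U σ)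
    (hUnorm : ∀ (s : ℝ) (x : ℋ), ‖U s x‖ = ‖x‖)
    (P : ℋ →L[ℂ] ℋ) (hP : ∀ s : ℝ, P ∘L U s = U s ∘L P)
    (E : ℝ → ℋ →L[ℂ] ℋ) (hE0 : E 0 = 1)
    (T δ C Cε ε : ℝ) (hT : 0 < T) (hδ : 0 < δ) (hC : 0 ≤ C) (hCε : 0 ≤ Cε) (hε : 0 < ε)
    (hstab : ∀ t ∈ Ioo (0 : ℝ) δ, ‖E t‖ ≤ Real.exp (C * t))
    (herr : ∀ t ∈ Ioo (0 : ℝ) δ, ‖(E t - U t) ∘L P‖ ≤ Cε * t ^ (1 + ε)) :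
    ∀ t ∈ Ioc (0 : ℝ) T, ∀ l : List ℝ, l ≠ [] → (∀ s ∈ l, s ∈ Ioo (0 : ℝ) δ) →
      l.sum = t →
      ‖((l.map E).prod - U t) ∘L P‖ ≤ Real.exp (C * T) * Cε * t * (l.foldr max 0) ^ ε :=
  telescoping_estimate_general U hU0 hUgrp hUnorm P hP E T δ C Cε ε hC hCε hε hstab herr
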